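/- arXiv:2104.07563 — 9 statements merged into one kernel-verified Lean document; each statement's English description precedes it below -/
import Mathlib

section
/- If P is a symmetric positive semidefinite real d×d matrix, then the Frobenius norm of P^{1/2} - id is at most the Frobenius norm of P - id, where P^{1/2} is the positive semidefinite square root of P. -/
open Matrix

/-- The Frobenius norm of a real matrix: `‖A‖ = sqrt (trace (Aᵀ A))`. -/
noncomputable def frobNorm {m n : Type*} [Fintype m] [Fintype n]
    (A : Matrix m n ℝ) : ℝ :=
  Real.sqrt (Matrix.trace (Aᵀ * A))

open scoped ComplexOrder in
/-- The former Mathlib `Matrix.PosSemidef.sqrt` (removed upstream), with its old definition. -/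
noncomputable def Matrix.PosSemidef.sqrt {n 𝕜 : Type*} [Fintype n] [RCLike 𝕜] [DecidableEq n]
    {A : Matrix n n 𝕜} (hA : A.PosSemidef) : Matrix n n 𝕜 :=
  hA.1.eigenvectorUnitary.1 * diagonal ((↑) ∘ (√·) ∘ hA.1.eigenvalues) *
    (star hA.1.eigenvectorUnitary : Matrix n n 𝕜)

/-! Diagonalise `P = U diag(λ) Uᵀ` with `U` orthogonal. Then `P - 1` and `P^{1/2} - 1` are the
conjugates by `U` of `diag(λ - 1)` and `diag(√λ - 1)`, and the Frobenius norm is invariant under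
orthogonal conjugation, so the claim reduces to `(√λ - 1)² ≤ (λ - 1)²` for `λ ≥ 0`. This holds
because `λ - 1 = (√λ - 1)(√λ + 1)` and `√λ + 1 ≥ 1`. -/

theorem Real.sq_sqrt_sub_one_le {x : ℝ} (hx : 0 ≤ x) : (√x - 1) ^ 2 ≤ (x - 1) ^ 2 := by
  have hfac : x - 1 = (√x - 1) * (√x + 1) := by nlinarith [Real.sq_sqrt hx]
  rw [hfac, mul_pow]
  nlinarith [sq_nonneg (√x - 1), Real.sqrt_nonneg x]

section

variable {n : Type*} [Fintype n] [DecidableEq n]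

theorem frobNorm_conj_unitary (U : unitaryGroup n ℝ) (A : Matrix n n ℝ) :
    frobNorm ((U : Matrix n n ℝ) * A * star (U : Matrix n n ℝ)) = frobNorm A := by
  have hstar : star (U : Matrix n n ℝ) = (U : Matrix n n ℝ)ᵀ := rfl
  have hU : (U : Matrix n n ℝ)ᵀ * U = 1 := hstar ▸ mem_unitaryGroup_iff'.mp U.2
  unfold frobNorm
  rw [hstar, transpose_mul, transpose_mul, transpose_transpose, ← trace_mul_cycle]
  simp only [Matrix.mul_assoc]
  rw [← Matrix.mul_assoc _ (U : Matrix n n ℝ), hU, Matrix.one_mul, Matrix.mul_one]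

theorem frobNorm_diagonal (f : n → ℝ) : frobNorm (diagonal f) = √(∑ i, f i ^ 2) := by
  simp [frobNorm, diagonal_transpose, diagonal_mul_diagonal, sq]

theorem conj_diagonal_sub_one {R : Type*} [CommRing R] [StarRing R] (U : unitaryGroup n R)
    (f : n → R) :
    (U : Matrix n n R) * diagonal f * star (U : Matrix n n R) - 1 =
      (U : Matrix n n R) * diagonal (f - 1) * star (U : Matrix n n R) := by
  have hdiag : diagonal (f - 1) = diagonal f - 1 := by rw [← diagonal_one, diagonal_sub]; rfl
  rw [hdiag, Matrix.mul_sub, Matrix.sub_mul, Matrix.mul_one, mem_unitaryGroup_iff.mp U.2]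

end

/-- If `P` is symmetric positive semidefinite, then `‖P^{1/2} - id‖ ≤ ‖P - id‖`
in the Frobenius norm. -/
theorem frobNorm_sqrt_sub_one_le
    (d : ℕ) (P : Matrix (Fin d) (Fin d) ℝ) (hP : P.PosSemidef) :
    frobNorm (hP.sqrt - 1) ≤ frobNorm (P - 1) := by
  set U := hP.1.eigenvectorUnitary
  set μ := hP.1.eigenvalues
  have hP_eq : P = U * diagonal μ * star (U : Matrix (Fin d) (Fin d) ℝ) := by
    simpa using hP.1.spectral_theorem
  have hsqrt_eq : hP.sqrt = U * diagonal (fun i ↦ √(μ i)) * star (U : Matrix (Fin d) (Fin d) ℝ) :=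
    rfl
  rw [hsqrt_eq, hP_eq, conj_diagonal_sub_one, conj_diagonal_sub_one, frobNorm_conj_unitary,
    frobNorm_conj_unitary, frobNorm_diagonal, frobNorm_diagonal]
  exact Real.sqrt_le_sqrt <| Finset.sum_le_sum fun i _ ↦
    Real.sq_sqrt_sub_one_le (hP.eigenvalues_nonneg i)
end

section
/- For any real matrices M, N ∈ ℝ^{n×d} with orthonormal columns (Mᵀ M = id, Nᵀ N = id), we have ‖M Mᵀ - N Nᵀ‖ ≤ √2 · ‖M - N‖ in the Frobenius norm; that is, the map M ↦ M Mᵀ from the Stiefel manifold ST(d,n) to the Grassmannian GR(d,n) is √2-Lipschitz with respect to the Frobenius distance. -/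
open Matrix

lemma trace_transpose_mul_self_nonneg {m n : Type*} [Fintype m] [Fintype n]
    (A : Matrix m n ℝ) : 0 ≤ Matrix.trace (Aᵀ * A) := by
  rw [Matrix.trace]
  refine Finset.sum_nonneg fun i _ => ?_
  rw [Matrix.diag_apply, Matrix.mul_apply]
  exact Finset.sum_nonneg fun j _ => mul_self_nonneg _

/-- The map `M ↦ M Mᵀ` from the Stiefel manifold `ST(d,n)` (n×d matrices with
orthonormal columns) to the Grassmannian is `√2`-Lipschitz for the Frobenius distance. -/
theorem projection_sqrt_two_lipschitz
    (n d : ℕ) (M N : Matrix (Fin n) (Fin d) ℝ)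
    (hM : Mᵀ * M = 1) (hN : Nᵀ * N = 1) :
    frobNorm (M * Mᵀ - N * Nᵀ) ≤ Real.sqrt 2 * frobNorm (M - N) := by
  set S : Matrix (Fin d) (Fin d) ℝ := Mᵀ * N with hS
  have htr1 : Matrix.trace (1 : Matrix (Fin d) (Fin d) ℝ) = (d : ℝ) := by
    simp [Matrix.trace_one]
  have hts : Matrix.trace Sᵀ = Matrix.trace S := Matrix.trace_transpose S
  have hSt : Sᵀ = Nᵀ * M := by rw [hS, Matrix.transpose_mul, Matrix.transpose_transpose]
  -- trace (MMᵀ MMᵀ) = d and similarly for N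
  have hMM : Matrix.trace ((M * Mᵀ) * (M * Mᵀ)) = (d : ℝ) := by
    rw [Matrix.mul_assoc, ← Matrix.mul_assoc Mᵀ M Mᵀ, hM, Matrix.one_mul,
      Matrix.trace_mul_comm, hM, htr1]
  have hNN : Matrix.trace ((N * Nᵀ) * (N * Nᵀ)) = (d : ℝ) := by
    rw [Matrix.mul_assoc, ← Matrix.mul_assoc Nᵀ N Nᵀ, hN, Matrix.one_mul,
      Matrix.trace_mul_comm, hN, htr1]
  -- cross terms
  have hMN : Matrix.trace ((M * Mᵀ) * (N * Nᵀ)) = Matrix.trace (Sᵀ * S) := by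
    rw [hS, hSt]
    simp only [← Matrix.mul_assoc]
    rw [Matrix.trace_mul_comm]
    simp only [← Matrix.mul_assoc]
  have hNM : Matrix.trace ((N * Nᵀ) * (M * Mᵀ)) = Matrix.trace (Sᵀ * S) := by
    rw [Matrix.trace_mul_comm]; exact hMN
  -- expand LHS squared
  have e1 : Matrix.trace ((M * Mᵀ - N * Nᵀ)ᵀ * (M * Mᵀ - N * Nᵀ))
      = 2 * (d : ℝ) - 2 * Matrix.trace (Sᵀ * S) := by
    have hsymm : (M * Mᵀ - N * Nᵀ)ᵀ = M * Mᵀ - N * Nᵀ := by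
      simp [Matrix.transpose_sub, Matrix.transpose_mul]
    rw [hsymm, Matrix.sub_mul, Matrix.mul_sub, Matrix.mul_sub, Matrix.trace_sub,
      Matrix.trace_sub, Matrix.trace_sub, hMM, hNN, hMN, hNM]
    ring
  -- expand RHS squared
  have e2 : Matrix.trace ((M - N)ᵀ * (M - N))
      = 2 * (d : ℝ) - 2 * Matrix.trace S := by
    rw [Matrix.transpose_sub, Matrix.sub_mul, Matrix.mul_sub, Matrix.mul_sub,
      Matrix.trace_sub, Matrix.trace_sub, Matrix.trace_sub, hM, hN, htr1, ← hS, ← hSt,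
      Matrix.trace_transpose, hS]
    ring
  -- key inequality from positivity of trace ((1-S)ᵀ(1-S))
  have key : Matrix.trace ((M * Mᵀ - N * Nᵀ)ᵀ * (M * Mᵀ - N * Nᵀ))
      ≤ 2 * Matrix.trace ((M - N)ᵀ * (M - N)) := by
    rw [e1, e2]
    have hpos := trace_transpose_mul_self_nonneg ((1 : Matrix (Fin d) (Fin d) ℝ) - S)
    have hexp : Matrix.trace (((1 : Matrix (Fin d) (Fin d) ℝ) - S)ᵀ * (1 - S))
        = (d : ℝ) - 2 * Matrix.trace S + Matrix.trace (Sᵀ * S) := by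
      rw [Matrix.transpose_sub, Matrix.transpose_one, Matrix.sub_mul, Matrix.mul_sub,
        Matrix.mul_sub, Matrix.trace_sub, Matrix.trace_sub, Matrix.trace_sub,
        Matrix.one_mul, Matrix.mul_one, htr1, hts]
      simp only [Matrix.one_mul]
      ring
    rw [hexp] at hpos
    linarith
  unfold frobNorm
  rw [← Real.sqrt_mul (by norm_num : (0:ℝ) ≤ 2)]
  exact Real.sqrt_le_sqrt key
end

section
/- Let M, N be n×d real matrices with orthonormal columns. Then there exists an orthogonal matrix Ω ∈ O(d) such that ‖MΩ - N‖ ≤ ‖M Mᵀ - N Nᵀ‖, where ‖·‖ is the Frobenius norm. -/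
/-!
Put `A = Mᵀ N`. Expanding the traces, `‖MΩ - N‖² = 2d - 2 tr (Ωᵀ A)` and
`‖M Mᵀ - N Nᵀ‖² = 2d - 2 tr (Aᵀ A)`, so we need an orthogonal `Ω` with `tr (Aᵀ A) ≤ tr (Ωᵀ A)`.
Since `1 - Aᵀ A = Nᵀ (1 - M Mᵀ) N` and `1 - M Mᵀ` is an orthogonal projection, `0 ≤ Aᵀ A ≤ 1`.
Take the polar decomposition `A = Ω √(Aᵀ A)`: then `tr (Ωᵀ A) = tr √(Aᵀ A) ≥ tr (Aᵀ A)`,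
because `√x ≥ x` on the spectrum of `Aᵀ A`, which lies in `[0, 1]`.
-/

open Matrix

open scoped MatrixOrder ComplexOrder

theorem LinearMap.exists_linearIsometry_comp_eq_of_norm_eq {𝕜 E : Type*} [RCLike 𝕜]
    [NormedAddCommGroup E] [InnerProductSpace 𝕜 E] [FiniteDimensional 𝕜 E]
    {S T : E →ₗ[𝕜] E} (h : ∀ x, ‖T x‖ = ‖S x‖) :
    ∃ U : E →ₗᵢ[𝕜] E, ∀ x, U (S x) = T x := by
  have hker : LinearMap.ker S ≤ LinearMap.ker T := fun x hx => by
    simpa [← norm_eq_zero, h x] using hx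
  let L : LinearMap.range S →ₗ[𝕜] E :=
    (LinearMap.ker S).liftQ T hker ∘ₗ S.quotKerEquivRange.symm.toLinearMap
  have hL : ∀ x, L ⟨S x, LinearMap.mem_range_self S x⟩ = T x := fun x => by
    simp [L, LinearMap.quotKerEquivRange_symm_apply_image]
  let L' : LinearMap.range S →ₗᵢ[𝕜] E := ⟨L, by
    rintro ⟨_, x, rfl⟩
    rw [hL, h]
    rfl⟩
  refine ⟨L'.extend, fun x => ?_⟩
  rw [show S x = ((⟨S x, LinearMap.mem_range_self S x⟩ : LinearMap.range S) : E) from rfl,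
    LinearIsometry.extend_apply]
  exact hL x

namespace Matrix

variable {n : Type*} [Fintype n] [DecidableEq n]

theorem exists_mem_unitaryGroup_mul_eq_of_conjTranspose_mul_self_eq {𝕜 : Type*} [RCLike 𝕜]
    {A P : Matrix n n 𝕜} (h : Aᴴ * A = Pᴴ * P) : ∃ U ∈ unitaryGroup n 𝕜, A = U * P := by
  set e := toEuclideanCLM (n := n) (𝕜 := 𝕜)
  have hAP : (e A).adjoint ∘L e A = (e P).adjoint ∘L e P := by
    simp only [← ContinuousLinearMap.star_eq_adjoint, ← ContinuousLinearMap.mul_def, ← map_star,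
      ← map_mul, star_eq_conjTranspose, h]
  have hnorm : ∀ x, ‖e A x‖ = ‖e P x‖ := fun x => by
    rw [← sq_eq_sq₀ (norm_nonneg _) (norm_nonneg _),
      ContinuousLinearMap.apply_norm_sq_eq_inner_adjoint_left,
      ContinuousLinearMap.apply_norm_sq_eq_inner_adjoint_left, hAP]
  obtain ⟨V, hV⟩ := LinearMap.exists_linearIsometry_comp_eq_of_norm_eq hnorm
  set u := Unitary.linearIsometryEquiv.symm (V.toLinearIsometryEquiv rfl)
  have hAu : e A = u * e P := ContinuousLinearMap.ext fun x => (hV x).symm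
  refine ⟨e.symm u, Unitary.map_mem _ u.2, ?_⟩
  rw [← e.symm_apply_apply A, hAu, map_mul, e.symm_apply_apply]

theorem exists_mem_unitaryGroup_mul_sqrt {𝕜 : Type*} [RCLike 𝕜] (A : Matrix n n 𝕜) :
    ∃ U ∈ unitaryGroup n 𝕜, A = U * CFC.sqrt (Aᴴ * A) := by
  have hAA : 0 ≤ Aᴴ * A := nonneg_iff_posSemidef.2 (posSemidef_conjTranspose_mul_self A)
  refine exists_mem_unitaryGroup_mul_eq_of_conjTranspose_mul_self_eq ?_
  rw [(nonneg_iff_posSemidef.1 (CFC.sqrt_nonneg (Aᴴ * A))).isHermitian.eq,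
    CFC.sqrt_mul_sqrt_self _ hAA]

theorem trace_le_trace_sqrt {H : Matrix n n ℝ} (h0 : 0 ≤ H) (h1 : H ≤ 1) :
    trace H ≤ trace (CFC.sqrt H) := by
  have hsub : cfc (fun x => √x - x) H = CFC.sqrt H - H := by
    rw [cfc_sub Real.sqrt (fun x => x) H, cfc_id' ℝ H, CFC.sqrt_eq_real_sqrt H, cfcₙ_eq_cfc]
  have hnonneg : 0 ≤ CFC.sqrt H - H := by
    rw [← hsub]
    exact cfc_nonneg fun x hx =>
      sub_nonneg.2 (Real.le_sqrt_self_iff.2 ((CFC.le_one_iff H).1 h1 x hx))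
  have := (nonneg_iff_posSemidef.1 hnonneg).trace_nonneg
  rw [trace_sub] at this
  linarith

theorem exists_mem_orthogonalGroup_trace_transpose_mul_self_le {A : Matrix n n ℝ}
    (h : Aᵀ * A ≤ 1) : ∃ Ω ∈ orthogonalGroup n ℝ, trace (Aᵀ * A) ≤ trace (Ωᵀ * A) := by
  obtain ⟨U, hU, hA⟩ := exists_mem_unitaryGroup_mul_sqrt A
  rw [conjTranspose_eq_transpose_of_trivial] at hA
  refine ⟨U, hU, ?_⟩
  have hUU : Uᵀ * U = 1 := (mem_orthogonalGroup_iff' _ _).1 hU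
  calc trace (Aᵀ * A) ≤ trace (CFC.sqrt (Aᵀ * A)) :=
        trace_le_trace_sqrt (star_mul_self_nonneg A) h
    _ = trace (Uᵀ * A) := by
      conv_rhs => rw [hA, ← Matrix.mul_assoc, hUU, Matrix.one_mul]

theorem transpose_mul_self_le_one_of_orthonormal {m d : Type*} [Fintype m] [DecidableEq m]
    [Fintype d] [DecidableEq d] {M N : Matrix m d ℝ} (hM : Mᵀ * M = 1) (hN : Nᵀ * N = 1) :
    (Mᵀ * N)ᵀ * (Mᵀ * N) ≤ 1 := by
  set P := 1 - M * Mᵀ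
  have hPt : Pᵀ = P := by simp [P]
  have hPP : P * P = P := by
    have hMM : M * Mᵀ * (M * Mᵀ) = M * Mᵀ := by
      rw [Matrix.mul_assoc, ← Matrix.mul_assoc Mᵀ, hM, Matrix.one_mul]
    simp only [P, sub_mul, mul_sub, one_mul, mul_one, hMM, sub_self, sub_zero]
  have : 1 - (Mᵀ * N)ᵀ * (Mᵀ * N) = (P * N)ᵀ * (P * N) := calc
    1 - (Mᵀ * N)ᵀ * (Mᵀ * N) = Nᵀ * P * N := by
      simp only [P, transpose_mul, transpose_transpose, Matrix.mul_sub, Matrix.sub_mul,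
        Matrix.mul_one, hN, Matrix.mul_assoc]
    _ = (P * N)ᵀ * (P * N) := by
      rw [transpose_mul, hPt, ← Matrix.mul_assoc (Nᵀ * P), Matrix.mul_assoc Nᵀ P P, hPP]
  rw [le_iff, this, ← conjTranspose_eq_transpose_of_trivial]
  exact posSemidef_conjTranspose_mul_self _

theorem trace_transpose_mul_self_mul_transpose_eq_card {m k : Type*} [Fintype m] [Fintype k]
    [DecidableEq k] {X : Matrix m k ℝ} (hX : Xᵀ * X = 1) :
    trace ((X * Xᵀ)ᵀ * (X * Xᵀ)) = Fintype.card k := by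
  rw [transpose_mul, transpose_transpose, Matrix.mul_assoc, ← Matrix.mul_assoc Xᵀ, hX,
    Matrix.one_mul, trace_mul_comm, hX, trace_one]

theorem trace_transpose_mul_self_sub {m k : Type*} [Fintype m] [Fintype k] (X Y : Matrix m k ℝ) :
    trace ((X - Y)ᵀ * (X - Y)) = trace (Xᵀ * X) + trace (Yᵀ * Y) - 2 * trace (Xᵀ * Y) := by
  have hYX : trace (Yᵀ * X) = trace (Xᵀ * Y) := by
    rw [← trace_transpose, transpose_mul, transpose_transpose]
  simp only [transpose_sub, Matrix.sub_mul, Matrix.mul_sub, trace_sub, hYX]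
  ring

end Matrix

/-- For frames `M, N` with orthonormal columns, there is an orthogonal matrix `Ω`
with `‖MΩ - N‖ ≤ ‖M Mᵀ - N Nᵀ‖` in the Frobenius norm. -/
theorem exists_orthogonal_align
    (n d : ℕ) (M N : Matrix (Fin n) (Fin d) ℝ)
    (hM : Mᵀ * M = 1) (hN : Nᵀ * N = 1) :
    ∃ Ω : Matrix (Fin d) (Fin d) ℝ, Ω * Ωᵀ = 1 ∧
      frobNorm (M * Ω - N) ≤ frobNorm (M * Mᵀ - N * Nᵀ) := by
  obtain ⟨Ω, hΩ, htr⟩ := exists_mem_orthogonalGroup_trace_transpose_mul_self_le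
    (transpose_mul_self_le_one_of_orthonormal hM hN)
  refine ⟨Ω, (mem_orthogonalGroup_iff _ _).1 hΩ, Real.sqrt_le_sqrt ?_⟩
  have hMΩ : (M * Ω)ᵀ * (M * Ω) = 1 := by
    rw [transpose_mul, Matrix.mul_assoc, ← Matrix.mul_assoc Mᵀ, hM, Matrix.one_mul,
      (mem_orthogonalGroup_iff' _ _).1 hΩ]
  have hMΩN : trace ((M * Ω)ᵀ * N) = trace (Ωᵀ * (Mᵀ * N)) := by
    rw [transpose_mul, Matrix.mul_assoc]
  have hMMNN : trace ((M * Mᵀ)ᵀ * (N * Nᵀ)) = trace ((Mᵀ * N)ᵀ * (Mᵀ * N)) := by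
    rw [transpose_mul, transpose_mul, transpose_transpose, Matrix.mul_assoc Nᵀ,
      trace_mul_comm Nᵀ]
    simp only [Matrix.mul_assoc]
  rw [trace_transpose_mul_self_sub, trace_transpose_mul_self_sub, hMΩ, hN, hMΩN, hMMNN,
    trace_transpose_mul_self_mul_transpose_eq_card hM,
    trace_transpose_mul_self_mul_transpose_eq_card hN, trace_one]
  linarith
end

section
/- Let M, N ∈ O(d) be orthogonal matrices with det(M) = 1 and det(N) = -1. Then the Frobenius norm of M - N is at least 2. -/
open Matrix

/-! Since `Mᵀ (M + N) Nᵀ = (M + N)ᵀ` and `det M * det N = -1`, the matrix `M + N` is singular,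
so `N v = -M v` for some `v ≠ 0`. Then `(M - N) v = 2 M v` has length `2 ‖v‖`, and the
Frobenius norm dominates the operator norm. -/

namespace Matrix

variable {m n R : Type*} [Fintype m] [Fintype n]

section CommSemiring

variable [CommSemiring R]

theorem trace_transpose_mul_self_eq_sum_sq (A : Matrix m n R) :
    (Aᵀ * A).trace = ∑ i, ∑ j, A i j ^ 2 := by
  rw [trace, Finset.sum_comm]
  simp [mul_apply, sq]

theorem mulVec_dotProduct_mulVec_self_of_transpose_mul_self [DecidableEq n]
    {M : Matrix n n R} (hM : Mᵀ * M = 1) (v : n → R) : (M *ᵥ v) ⬝ᵥ (M *ᵥ v) = v ⬝ᵥ v := by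
  rw [dotProduct_mulVec, ← mulVec_transpose, mulVec_mulVec, hM, one_mulVec]

end CommSemiring

theorem mulVec_dotProduct_mulVec_self_le [CommRing R] [LinearOrder R] [IsStrictOrderedRing R]
    (A : Matrix m n R) (v : n → R) :
    (A *ᵥ v) ⬝ᵥ (A *ᵥ v) ≤ (Aᵀ * A).trace * (v ⬝ᵥ v) := by
  rw [trace_transpose_mul_self_eq_sum_sq, Finset.sum_mul]
  refine Finset.sum_le_sum fun i _ => ?_
  simpa [mulVec, dotProduct, sq] using Finset.sum_mul_sq_le_sq_mul_sq Finset.univ (A i) v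

section Orthogonal

variable [DecidableEq n] [CommRing R] [IsDomain R] [NeZero (2 : R)] {M N : Matrix n n R}

theorem det_add_eq_zero_of_det_mul_det_eq_neg_one
    (hM : M * Mᵀ = 1) (hN : N * Nᵀ = 1) (hdet : M.det * N.det = -1) :
    (M + N).det = 0 := by
  have hconj : Mᵀ * (M + N) * Nᵀ = (M + N)ᵀ := by
    rw [mul_add, add_mul, mul_eq_one_comm.mp hM, one_mul, Matrix.mul_assoc, hN, mul_one,
      transpose_add, add_comm]
  have hdet_conj := congrArg det hconj
  rw [det_mul, det_mul, det_transpose, det_transpose, det_transpose] at hdet_conj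
  have h2 : 2 * (M + N).det = 0 := by linear_combination (M + N).det * hdet - hdet_conj
  exact (mul_eq_zero.mp h2).resolve_left two_ne_zero

theorem exists_mulVec_eq_neg_mulVec_of_det_mul_det_eq_neg_one
    (hM : M * Mᵀ = 1) (hN : N * Nᵀ = 1) (hdet : M.det * N.det = -1) :
    ∃ v ≠ 0, N *ᵥ v = -(M *ᵥ v) := by
  obtain ⟨v, hv, hMN⟩ :=
    exists_mulVec_eq_zero_iff.mpr (det_add_eq_zero_of_det_mul_det_eq_neg_one hM hN hdet)
  exact ⟨v, hv, eq_neg_of_add_eq_zero_right (by rwa [← add_mulVec])⟩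

end Orthogonal

end Matrix

/-- Orthogonal matrices with determinants `1` and `-1` are at Frobenius distance
at least `2`. -/
theorem frobNorm_ge_two_of_det_ne
    (d : ℕ) (M N : Matrix (Fin d) (Fin d) ℝ)
    (hM : M * Mᵀ = 1) (hN : N * Nᵀ = 1)
    (hdM : M.det = 1) (hdN : N.det = -1) :
    2 ≤ frobNorm (M - N) := by
  obtain ⟨v, hv, hNv⟩ :=
    exists_mulVec_eq_neg_mulVec_of_det_mul_det_eq_neg_one hM hN (by rw [hdM, hdN, one_mul])
  have hMNv : (M - N) *ᵥ v = (2 : ℝ) • (M *ᵥ v) := by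
    rw [sub_mulVec, hNv, sub_neg_eq_add, two_smul]
  have hv_pos : 0 < v ⬝ᵥ v := by simpa using dotProduct_star_self_pos_iff.mpr hv
  have h4 : 4 * (v ⬝ᵥ v) ≤ ((M - N)ᵀ * (M - N)).trace * (v ⬝ᵥ v) :=
    calc 4 * (v ⬝ᵥ v) = ((M - N) *ᵥ v) ⬝ᵥ ((M - N) *ᵥ v) := by
          rw [hMNv, smul_dotProduct, dotProduct_smul,
            mulVec_dotProduct_mulVec_self_of_transpose_mul_self (mul_eq_one_comm.mp hM)]
          simp only [smul_eq_mul]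
          ring
      _ ≤ _ := mulVec_dotProduct_mulVec_self_le _ v
  rw [frobNorm, Real.le_sqrt' two_pos]
  linarith [le_of_mul_le_mul_right h4 hv_pos]
end

section
/- The reach of O(d) as a subset of ℝ^{d×d} with the Frobenius distance is exactly 1. In particular: (a) any matrix A with Frobenius distance to O(d) strictly less than 1 has a unique closest orthogonal matrix, and (b) there exists a matrix at distance 1 from O(d) with two distinct closest orthogonal matrices. -/
open Matrix

/-!
For orthogonal `Ω` one has `‖A - Ω‖² = ‖A‖² + d - 2 tr (Aᵀ Ω)`, so the orthogonal matrices nearest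
to `A` are the maximisers of `tr (Aᵀ Ω)`. If `A` is invertible, write `A = U T` with `U` orthogonal
and `T = |A|` positive definite; then `tr (Aᵀ Ω) = tr (T Uᵀ Ω) ≤ tr T`, with equality only for
`Ω = U`, because `tr T - tr (T R) = ‖B - B R‖² / 2` whenever `T = Bᵀ B` and `R` is orthogonal.
A matrix at distance `< 1` from `O(d)` is invertible: if `A v = 0` with `v ≠ 0`, then
`‖v‖ = ‖(A - Ω) v‖ ≤ ‖A - Ω‖ ‖v‖`. Conversely, for a rank-one orthogonal projection `E` the
singular matrix `1 - E` is at distance `≥ 1` from `O(d)`, attained both at `1` and at the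
reflection `1 - 2E`.
-/

section FrobeniusNorm

variable {l m n : Type*} [Fintype l] [Fintype m] [Fintype n]

attribute [local instance] Matrix.frobeniusNormedAddCommGroup

lemma frobNorm_eq_norm (A : Matrix m n ℝ) : frobNorm A = ‖A‖ := by
  rw [frobNorm, frobenius_norm_def, ← Real.sqrt_eq_rpow, Finset.sum_comm]
  simp [trace, mul_apply, sq]

lemma frobNorm_nonneg (A : Matrix m n ℝ) : 0 ≤ frobNorm A := Real.sqrt_nonneg _

lemma frobNorm_pos {A : Matrix m n ℝ} (hA : A ≠ 0) : 0 < frobNorm A := by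
  simpa [frobNorm_eq_norm] using hA

lemma frobNorm_eq_zero {A : Matrix m n ℝ} : frobNorm A = 0 ↔ A = 0 := by
  rw [frobNorm_eq_norm, norm_eq_zero]

lemma frobNorm_sq (A : Matrix m n ℝ) : frobNorm A ^ 2 = trace (Aᵀ * A) := by
  rw [frobNorm_eq_norm, frobenius_norm_def, ← Real.sqrt_eq_rpow, Real.sq_sqrt (by positivity),
    Finset.sum_comm]
  simp [trace, mul_apply, sq]

lemma frobNorm_neg (A : Matrix m n ℝ) : frobNorm (-A) = frobNorm A := by
  simp only [frobNorm_eq_norm, norm_neg]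

lemma frobNorm_mul_le (A : Matrix l m ℝ) (B : Matrix m n ℝ) :
    frobNorm (A * B) ≤ frobNorm A * frobNorm B := by
  simpa only [frobNorm_eq_norm] using frobenius_norm_mul A B

lemma frobNorm_orthogonal_mul [DecidableEq m] {Ω : Matrix m m ℝ} (hΩ : Ω * Ωᵀ = 1)
    (B : Matrix m n ℝ) : frobNorm (Ω * B) = frobNorm B := by
  rw [frobNorm, frobNorm, transpose_mul, Matrix.mul_assoc, ← Matrix.mul_assoc Ωᵀ,
    mul_eq_one_comm.mp hΩ, Matrix.one_mul]

end FrobeniusNorm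

section NearestOrthogonal

variable {n : Type*} [Fintype n] [DecidableEq n]

lemma frobNorm_sub_orthogonal_sq (A : Matrix n n ℝ) {Ω : Matrix n n ℝ} (hΩ : Ω * Ωᵀ = 1) :
    frobNorm (A - Ω) ^ 2 = frobNorm A ^ 2 + Fintype.card n - 2 * trace (Aᵀ * Ω) := by
  have hΩA : trace (Ωᵀ * A) = trace (Aᵀ * Ω) := by
    rw [← trace_transpose, transpose_mul, transpose_transpose]
  rw [frobNorm_sq, frobNorm_sq, transpose_sub, sub_mul, mul_sub, mul_sub, mul_eq_one_comm.mp hΩ,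
    trace_sub, trace_sub, trace_sub, trace_one, hΩA]
  ring

lemma frobNorm_sub_le_frobNorm_sub_iff (A : Matrix n n ℝ) {Ω Ω' : Matrix n n ℝ}
    (hΩ : Ω * Ωᵀ = 1) (hΩ' : Ω' * Ω'ᵀ = 1) :
    frobNorm (A - Ω) ≤ frobNorm (A - Ω') ↔ trace (Aᵀ * Ω') ≤ trace (Aᵀ * Ω) := by
  rw [← sq_le_sq₀ (frobNorm_nonneg _) (frobNorm_nonneg _), frobNorm_sub_orthogonal_sq A hΩ,
    frobNorm_sub_orthogonal_sq A hΩ']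
  constructor <;> intro h <;> linarith

lemma one_le_frobNorm_sub_of_mul_eq_zero {m : Type*} [Fintype m] {A Ω : Matrix n n ℝ}
    {B : Matrix n m ℝ} (hΩ : Ω * Ωᵀ = 1) (hAB : A * B = 0) (hB : B ≠ 0) :
    1 ≤ frobNorm (A - Ω) := by
  have h : 1 * frobNorm B ≤ frobNorm (A - Ω) * frobNorm B := calc
    1 * frobNorm B = frobNorm (Ω * B) := by rw [one_mul, frobNorm_orthogonal_mul hΩ]
    _ = frobNorm ((A - Ω) * B) := by rw [Matrix.sub_mul, hAB, zero_sub, frobNorm_neg]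
    _ ≤ frobNorm (A - Ω) * frobNorm B := frobNorm_mul_le _ _
  exact le_of_mul_le_mul_right h (frobNorm_pos hB)

lemma one_le_frobNorm_sub_of_det_eq_zero {A Ω : Matrix n n ℝ} (hΩ : Ω * Ωᵀ = 1)
    (hA : A.det = 0) : 1 ≤ frobNorm (A - Ω) := by
  obtain ⟨v, hv, hAv⟩ := exists_mulVec_eq_zero_iff.mpr hA
  refine one_le_frobNorm_sub_of_mul_eq_zero (B := replicateCol Unit v) hΩ ?_ ?_
  · rw [← replicateCol_mulVec, hAv, replicateCol_zero]
  · exact fun h => hv (replicateCol_injective h)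

lemma frobNorm_sub_mul_orthogonal_sq (B : Matrix n n ℝ) {R : Matrix n n ℝ} (hR : R * Rᵀ = 1) :
    frobNorm (B - B * R) ^ 2 = 2 * (trace (Bᵀ * B) - trace (Bᵀ * B * R)) := by
  have hexpand : (B - B * R)ᵀ * (B - B * R)
      = Bᵀ * B - Bᵀ * B * R - Rᵀ * (Bᵀ * B) + Rᵀ * (Bᵀ * B) * R := by
    rw [transpose_sub, transpose_mul]; noncomm_ring
  have h₁ : trace (Rᵀ * (Bᵀ * B)) = trace (Bᵀ * B * R) := by
    rw [← trace_transpose, transpose_mul, transpose_mul, transpose_transpose, transpose_transpose]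
  have h₂ : trace (Rᵀ * (Bᵀ * B) * R) = trace (Bᵀ * B) := by
    rw [trace_mul_comm, ← mul_assoc, hR, one_mul]
  rw [frobNorm_sq, hexpand, trace_add, trace_sub, trace_sub, h₁, h₂]
  ring

open scoped MatrixOrder in
lemma Matrix.PosSemidef.exists_eq_transpose_mul_self {T : Matrix n n ℝ} (hT : T.PosSemidef) :
    ∃ B : Matrix n n ℝ, T = Bᵀ * B := by
  obtain ⟨B, hB⟩ := CStarAlgebra.nonneg_iff_eq_star_mul_self.mp hT.nonneg
  exact ⟨B, by rwa [star_eq_conjTranspose, conjTranspose_eq_transpose_of_trivial] at hB⟩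

lemma Matrix.PosSemidef.trace_mul_orthogonal_le {T R : Matrix n n ℝ} (hT : T.PosSemidef)
    (hR : R * Rᵀ = 1) : trace (T * R) ≤ trace T := by
  obtain ⟨B, rfl⟩ := hT.exists_eq_transpose_mul_self
  nlinarith [frobNorm_sub_mul_orthogonal_sq B hR, sq_nonneg (frobNorm (B - B * R))]

lemma Matrix.PosDef.eq_one_of_trace_mul_orthogonal_eq {T R : Matrix n n ℝ} (hT : T.PosDef)
    (hR : R * Rᵀ = 1) (h : trace (T * R) = trace T) : R = 1 := by
  obtain ⟨B, rfl⟩ := hT.posSemidef.exists_eq_transpose_mul_self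
  have hB : IsUnit B := isUnit_of_mul_isUnit_right hT.isUnit
  have hBR : B - B * R = 0 := by
    rw [← frobNorm_eq_zero, ← sq_eq_zero_iff, frobNorm_sub_mul_orthogonal_sq B hR, h, sub_self,
      mul_zero]
  exact (hB.mul_left_cancel (by rw [mul_one]; exact sub_eq_zero.mp hBR)).symm

open scoped MatrixOrder in
lemma exists_orthogonal_mul_posDef_eq {A : Matrix n n ℝ} (hA : IsUnit A) :
    ∃ U T : Matrix n n ℝ, U * Uᵀ = 1 ∧ T.PosDef ∧ U * T = A := by
  set T := CFC.abs A
  have hT₀ : T.PosSemidef := (CFC.abs_nonneg A).posSemidef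
  have hTT : T * T = Aᵀ * A := by
    rw [CFC.abs_mul_abs, star_eq_conjTranspose, conjTranspose_eq_transpose_of_trivial]
  have hTsymm : Tᵀ = T := (isHermitian_iff_isSymm.mp hT₀.isHermitian).eq
  have hT : IsUnit T :=
    isUnit_of_mul_isUnit_left (hTT ▸ ((isUnit_transpose A).mpr hA).mul hA : IsUnit (T * T))
  have hTdet := (isUnit_iff_isUnit_det T).mp hT
  refine ⟨A * T⁻¹, T, ?_, hT₀.posDef_iff_isUnit.mpr hT, nonsing_inv_mul_cancel_right T A hTdet⟩
  rw [← mul_eq_one_comm, transpose_mul, transpose_nonsing_inv, hTsymm, mul_assoc, ← mul_assoc Aᵀ,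
    ← hTT, mul_nonsing_inv_cancel_right T _ hTdet, nonsing_inv_mul _ hTdet]

lemma existsUnique_nearest_orthogonal_of_isUnit {A : Matrix n n ℝ} (hA : IsUnit A) :
    ∃! Ω : Matrix n n ℝ, Ω * Ωᵀ = 1 ∧
      ∀ Ω' : Matrix n n ℝ, Ω' * Ω'ᵀ = 1 → frobNorm (A - Ω) ≤ frobNorm (A - Ω') := by
  obtain ⟨U, T, hU, hT, rfl⟩ := exists_orthogonal_mul_posDef_eq hA
  have hUΩ {Ω : Matrix n n ℝ} (hΩ : Ω * Ωᵀ = 1) : (Uᵀ * Ω) * (Uᵀ * Ω)ᵀ = 1 := by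
    rw [transpose_mul, transpose_transpose, mul_assoc, ← mul_assoc Ω, hΩ, one_mul,
      mul_eq_one_comm.mp hU]
  have htrace (Ω : Matrix n n ℝ) : trace ((U * T)ᵀ * Ω) = trace (T * (Uᵀ * Ω)) := by
    rw [transpose_mul, (isHermitian_iff_isSymm.mp hT.isHermitian).eq, mul_assoc]
  have htraceU : trace ((U * T)ᵀ * U) = trace T := by
    rw [htrace, mul_eq_one_comm.mp hU, mul_one]
  refine ⟨U, ⟨hU, fun Ω' hΩ' => ?_⟩, fun Ω ⟨hΩ, hmin⟩ => ?_⟩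
  · rw [frobNorm_sub_le_frobNorm_sub_iff _ hU hΩ', htraceU, htrace]
    exact hT.posSemidef.trace_mul_orthogonal_le (hUΩ hΩ')
  · have hle := (frobNorm_sub_le_frobNorm_sub_iff _ hΩ hU).mp (hmin U hU)
    rw [htraceU, htrace] at hle
    have h1 := hT.eq_one_of_trace_mul_orthogonal_eq (hUΩ hΩ)
      (le_antisymm (hT.posSemidef.trace_mul_orthogonal_le (hUΩ hΩ)) hle)
    calc Ω = U * (Uᵀ * Ω) := by rw [← mul_assoc, hU, one_mul]
      _ = U := by rw [h1, mul_one]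

lemma existsUnique_nearest_orthogonal_of_frobNorm_sub_lt_one {A : Matrix n n ℝ}
    (h : ∃ Ω : Matrix n n ℝ, Ω * Ωᵀ = 1 ∧ frobNorm (A - Ω) < 1) :
    ∃! Ω : Matrix n n ℝ, Ω * Ωᵀ = 1 ∧
      ∀ Ω' : Matrix n n ℝ, Ω' * Ω'ᵀ = 1 → frobNorm (A - Ω) ≤ frobNorm (A - Ω') := by
  obtain ⟨Ω, hΩ, hlt⟩ := h
  refine existsUnique_nearest_orthogonal_of_isUnit ((isUnit_iff_isUnit_det A).mpr ?_)
  exact isUnit_iff_ne_zero.mpr fun hA => not_le.mpr hlt (one_le_frobNorm_sub_of_det_eq_zero hΩ hA)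

lemma one_sub_two_smul_mul_transpose_self {E : Matrix n n ℝ} (hE : Eᵀ = E) (hEE : E * E = E) :
    (1 - 2 • E : Matrix n n ℝ) * (1 - 2 • E)ᵀ = 1 := by
  rw [transpose_sub, transpose_one, transpose_smul, hE]
  calc (1 - 2 • E) * (1 - 2 • E) = 1 + 4 • (E * E - E) := by noncomm_ring
    _ = 1 := by rw [hEE, sub_self, smul_zero, add_zero]

lemma exists_two_nearest_orthogonal [Nonempty n] :
    ∃ A : Matrix n n ℝ, ∃ Ω₁ Ω₂ : Matrix n n ℝ,
        Ω₁ ≠ Ω₂ ∧ Ω₁ * Ω₁ᵀ = 1 ∧ Ω₂ * Ω₂ᵀ = 1 ∧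
        frobNorm (A - Ω₁) = 1 ∧ frobNorm (A - Ω₂) = 1 ∧
        ∀ Ω : Matrix n n ℝ, Ω * Ωᵀ = 1 → 1 ≤ frobNorm (A - Ω) := by
  let i : n := Classical.arbitrary n
  set E : Matrix n n ℝ := single i i 1
  have hE : Eᵀ = E := transpose_single ..
  have hEE : E * E = E := by rw [single_mul_single_same, mul_one]
  have hnormE : frobNorm E = 1 := by rw [frobNorm, hE, hEE, trace_single_eq_same, Real.sqrt_one]
  have hE₀ : E ≠ 0 := fun h => one_ne_zero (hnormE ▸ frobNorm_eq_zero.mpr h)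
  refine ⟨1 - E, 1, 1 - 2 • E, ?_, by simp, one_sub_two_smul_mul_transpose_self hE hEE, ?_, ?_,
    fun Ω hΩ => one_le_frobNorm_sub_of_mul_eq_zero hΩ (B := E) ?_ hE₀⟩
  · intro h
    have hii := congrFun (congrFun h i) i
    norm_num [E] at hii
  · rw [sub_sub_cancel_left, frobNorm_neg, hnormE]
  · rw [show (1 - E) - (1 - 2 • E) = E by abel, hnormE]
  · rw [sub_mul, one_mul, hEE, sub_self]

end NearestOrthogonal

/-- The reach of `O(d) ⊆ ℝ^{d×d}` (Frobenius distance) is exactly `1`: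
`1` is the greatest `ε ≥ 0` such that every matrix at distance `< ε` from `O(d)` has a
unique closest orthogonal matrix, and there is a matrix at distance exactly `1` from
`O(d)` with two distinct closest orthogonal matrices. -/
theorem reach_orthogonalGroup_eq_one (d : ℕ) (hd : 1 ≤ d) :
    IsGreatest
      {ε : ℝ | 0 ≤ ε ∧ ∀ A : Matrix (Fin d) (Fin d) ℝ,
        (∃ Ω : Matrix (Fin d) (Fin d) ℝ, Ω * Ωᵀ = 1 ∧ frobNorm (A - Ω) < ε) →
        (∃! Ω : Matrix (Fin d) (Fin d) ℝ, Ω * Ωᵀ = 1 ∧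
          ∀ Ω' : Matrix (Fin d) (Fin d) ℝ, Ω' * Ω'ᵀ = 1 →
            frobNorm (A - Ω) ≤ frobNorm (A - Ω'))} 1
    ∧ ∃ A : Matrix (Fin d) (Fin d) ℝ, ∃ Ω₁ Ω₂ : Matrix (Fin d) (Fin d) ℝ,
        Ω₁ ≠ Ω₂ ∧ Ω₁ * Ω₁ᵀ = 1 ∧ Ω₂ * Ω₂ᵀ = 1 ∧
        frobNorm (A - Ω₁) = 1 ∧ frobNorm (A - Ω₂) = 1 ∧
        ∀ Ω : Matrix (Fin d) (Fin d) ℝ, Ω * Ωᵀ = 1 → 1 ≤ frobNorm (A - Ω) := by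
  have : Nonempty (Fin d) := ⟨⟨0, hd⟩⟩
  refine ⟨⟨⟨zero_le_one, fun A => existsUnique_nearest_orthogonal_of_frobNorm_sub_lt_one⟩,
    fun ε ⟨_, hε⟩ => ?_⟩, exists_two_nearest_orthogonal⟩
  by_contra! h
  obtain ⟨A, Ω₁, Ω₂, hne, h₁, h₂, hA₁, hA₂, hmin⟩ := exists_two_nearest_orthogonal (n := Fin d)
  obtain ⟨Ω, -, huniq⟩ := hε A ⟨Ω₁, h₁, hA₁ ▸ h⟩
  have hΩ₁ := huniq Ω₁ ⟨h₁, fun Ω' hΩ' => hA₁ ▸ hmin Ω' hΩ'⟩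
  have hΩ₂ := huniq Ω₂ ⟨h₂, fun Ω' hΩ' => hA₂ ▸ hmin Ω' hΩ'⟩
  exact hne (hΩ₁.trans hΩ₂.symm)
end

section
/- Let N ∈ ℝ^{n×d} and let N = U P be a polar decomposition with U having orthonormal columns and P positive semidefinite. Then ‖N - U‖ ≤ ‖Nᵀ N - id‖ in Frobenius norm. -/
/-! With `Nᵀ N = P²` and `N - U = U (P - 1)`, the claim reduces to `‖P - 1‖ ≤ ‖P² - 1‖` for
`P ⪰ 0`. This holds because `(P² - 1)² - (P - 1)² = (P - 1)(P² + 2P)(P - 1)` is positive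
semidefinite, hence has nonnegative trace. -/

open Matrix

namespace Matrix

variable {m n k l : Type*} [Fintype m] [Fintype n] [Fintype k] [Fintype l]

lemma frobNorm_le_frobNorm_of_trace_le {A : Matrix m n ℝ} {B : Matrix k l ℝ}
    (h : (Aᵀ * A).trace ≤ (Bᵀ * B).trace) : frobNorm A ≤ frobNorm B :=
  Real.sqrt_le_sqrt h

variable [DecidableEq n]

lemma frobNorm_mul_of_transpose_mul_eq_one {U : Matrix m n ℝ} (hU : Uᵀ * U = 1)
    (A : Matrix n k ℝ) : frobNorm (U * A) = frobNorm A := by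
  rw [frobNorm, frobNorm, transpose_mul, Matrix.mul_assoc, ← Matrix.mul_assoc Uᵀ, hU,
    Matrix.one_mul]

lemma PosSemidef.frobNorm_sub_one_le_frobNorm_mul_self_sub_one {P : Matrix n n ℝ}
    (hP : P.PosSemidef) : frobNorm (P - 1) ≤ frobNorm (P * P - 1) := by
  have hPt : Pᵀ = P := (isHermitian_iff_isSymm.mp hP.isHermitian).eq
  have hQt : (P - 1)ᴴ = P - 1 := by
    rw [conjTranspose_eq_transpose_of_trivial, transpose_sub, hPt, transpose_one]
  have hdiff : (P * P - 1)ᵀ * (P * P - 1) - (P - 1)ᵀ * (P - 1)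
      = (P - 1)ᴴ * (P * P + (P + P)) * (P - 1) := by
    rw [hQt, transpose_sub, transpose_mul, transpose_sub, hPt, transpose_one]
    noncomm_ring
  have hmid : (P * P + (P + P)).PosSemidef := by
    simpa only [pow_two] using (hP.pow 2).add (hP.add hP)
  have hnonneg := (hmid.conjTranspose_mul_mul_same (P - 1)).trace_nonneg
  rw [← hdiff, trace_sub] at hnonneg
  exact frobNorm_le_frobNorm_of_trace_le (sub_nonneg.mp hnonneg)

end Matrix

/-- If `N = U P` is a polar decomposition (with `U` having orthonormal columns and `P`
positive semidefinite), then `‖N - U‖ ≤ ‖Nᵀ N - id‖` in Frobenius norm. -/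
theorem frobNorm_sub_polar_factor_le
    (n d : ℕ) (N U : Matrix (Fin n) (Fin d) ℝ) (P : Matrix (Fin d) (Fin d) ℝ)
    (hU : Uᵀ * U = 1) (hP : P.PosSemidef) (hNP : N = U * P) :
    frobNorm (N - U) ≤ frobNorm (Nᵀ * N - 1) := by
  have hPt : Pᵀ = P := (isHermitian_iff_isSymm.mp hP.isHermitian).eq
  have hNN : Nᵀ * N = P * P := by
    rw [hNP, transpose_mul, Matrix.mul_assoc, ← Matrix.mul_assoc Uᵀ, hU, Matrix.one_mul, hPt]
  have hNU : N - U = U * (P - 1) := by rw [hNP, Matrix.mul_sub, Matrix.mul_one]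
  rw [hNU, frobNorm_mul_of_transpose_mul_eq_one hU, hNN]
  exact hP.frobNorm_sub_one_le_frobNorm_mul_self_sub_one
end

section
/- The solutions of the orthogonal Procrustes problem min over Ω ∈ O(d) of ‖MΩ - N‖ (Frobenius norm), for M, N ∈ ℝ^{n×d}, are exactly the orthogonal matrices U appearing as the orthogonal factor of a polar decomposition Mᵀ N = U P. In particular, if Mᵀ N has full rank, the minimizer is unique. -/
/-!
For orthogonal `Ω` one has `‖MΩ - N‖² = ‖M‖² + ‖N‖² - 2 tr (Ωᵀ A)` with `A = MᵀN`, so the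
minimizers are the maximizers of `Ω ↦ tr (Ωᵀ A)` on `O(d)`. Substituting `Ω' = Ω Wᵀ`, `Ω` is one
exactly when `W = 1` maximizes `W ↦ tr (W B)` on `O(d)`, where `B = ΩᵀA`. That happens exactly when
`B` is positive semidefinite. If `B` is, then `tr B - tr (W B) = ½ tr ((1 - W)ᵀ B (1 - W)) ≥ 0`.
Conversely, the first variation of `t ↦ tr (exp (t S) B)` for skew `S` forces `B` to be symmetric,
and the reflection in a vector `x` would raise the trace by `-2 xᵀBx / xᵀx`.

When `A` is invertible, any such factorization `A = Ω P` has `P² = AᵀA`, so `P = √(AᵀA)` and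
`Ω = A P⁻¹` are forced, and this `Ω` is indeed orthogonal.
-/

open Matrix
open scoped MatrixOrder

namespace Matrix

variable {n : Type*} [Fintype n] [DecidableEq n]

lemma trace_mul_le_trace_of_mem_orthogonalGroup {W P : Matrix n n ℝ}
    (hW : W ∈ orthogonalGroup n ℝ) (hP : P.PosSemidef) : trace (W * P) ≤ trace P := by
  have hsq : (1 - W) * (1 - W)ᵀ = 1 + 1 - W - Wᵀ := by
    rw [transpose_sub, transpose_one, sub_mul, mul_sub, mul_sub,
      (mem_orthogonalGroup_iff _ _).mp hW]
    noncomm_ring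
  have hWP : trace (Wᵀ * P) = trace (W * P) := by
    rw [← trace_transpose, transpose_mul, transpose_transpose,
      (isHermitian_iff_isSymm.mp hP.isHermitian).eq, trace_mul_comm]
  have := (hP.conjTranspose_mul_mul_same (1 - W)).trace_nonneg
  rw [conjTranspose_eq_transpose_of_trivial, trace_mul_comm, ← Matrix.mul_assoc, hsq] at this
  simp only [sub_mul, add_mul, one_mul, trace_sub, trace_add, hWP] at this
  linarith

open NormedSpace in
lemma exp_mem_orthogonalGroup {S : Matrix n n ℝ} (hS : Sᵀ = -S) :
    exp S ∈ orthogonalGroup n ℝ := by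
  rw [mem_orthogonalGroup_iff, ← exp_transpose, hS,
    ← exp_add_of_commute _ _ (Commute.refl S).neg_right, add_neg_cancel, exp_zero]

open NormedSpace in
lemma trace_mul_eq_zero_of_forall_trace_mul_le {B S : Matrix n n ℝ} (hS : Sᵀ = -S)
    (hmax : ∀ W ∈ orthogonalGroup n ℝ, trace (W * B) ≤ trace B) : trace (S * B) = 0 := by
  let : NormedRing (Matrix n n ℝ) := Matrix.linftyOpNormedRing
  let : NormedAlgebra ℝ (Matrix n n ℝ) := Matrix.linftyOpNormedAlgebra
  have hderiv : HasDerivAt (fun t : ℝ => trace (exp (t • S) * B)) (trace (S * B)) 0 := by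
    have := hasDerivAt_exp_smul_const (𝕂 := ℝ) S 0
    rw [zero_smul, exp_zero, one_mul] at this
    exact ((traceLinearMap n ℝ ℝ).comp (LinearMap.mulRight ℝ B)).toContinuousLinearMap
      |>.hasFDerivAt.comp_hasDerivAt 0 this
  refine IsLocalMax.hasDerivAt_eq_zero (Filter.Eventually.of_forall fun t => ?_) hderiv
  simpa only [zero_smul, exp_zero, one_mul] using
    hmax _ (exp_mem_orthogonalGroup (by rw [transpose_smul, hS, smul_neg] : (t • S)ᵀ = -(t • S)))

lemma isSymm_of_forall_trace_mul_le {B : Matrix n n ℝ}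
    (hmax : ∀ W ∈ orthogonalGroup n ℝ, trace (W * B) ≤ trace B) : B.IsSymm := by
  set S := Bᵀ - B with hSdef
  have hS : Sᵀ = -S := by rw [hSdef, transpose_sub, transpose_transpose, neg_sub]
  have hSB : trace (S * B) = 0 := trace_mul_eq_zero_of_forall_trace_mul_le hS hmax
  have hSBt : trace (S * Bᵀ) = -trace (S * B) := by
    rw [← trace_transpose, transpose_mul, transpose_transpose, hS, Matrix.mul_neg, trace_neg,
      trace_mul_comm]
  have hSS : trace (Sᵀ * S) = 0 :=
    calc trace (Sᵀ * S) = trace (S * B) - trace (S * Bᵀ) := by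
          rw [hS, Matrix.neg_mul, trace_neg, hSdef, Matrix.mul_sub, trace_sub, neg_sub]
      _ = 0 := by rw [hSBt, hSB, neg_zero, sub_zero]
  exact sub_eq_zero.mp (trace_conjTranspose_mul_self_eq_zero_iff.mp hSS)

noncomputable def householder (x : n → ℝ) : Matrix n n ℝ :=
  1 - (2 / (x ⬝ᵥ x)) • vecMulVec x x

lemma householder_mem_orthogonalGroup {x : n → ℝ} (hx : x ≠ 0) :
    householder x ∈ orthogonalGroup n ℝ := by
  have hxx : x ⬝ᵥ x ≠ 0 := fun h => hx (dotProduct_self_eq_zero.mp h)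
  have hc : 2 / (x ⬝ᵥ x) * (2 / (x ⬝ᵥ x) * (x ⬝ᵥ x)) = 2 / (x ⬝ᵥ x) + 2 / (x ⬝ᵥ x) := by
    field_simp; ring
  rw [householder, mem_orthogonalGroup_iff, transpose_sub, transpose_one, transpose_smul,
    transpose_vecMulVec]
  simp only [sub_mul, mul_sub, one_mul, mul_one, Matrix.smul_mul, Matrix.mul_smul,
    vecMulVec_mul_vecMulVec, vecMulVec_smul, smul_smul, hc, add_smul]
  abel

lemma trace_householder_mul (x : n → ℝ) (B : Matrix n n ℝ) :
    trace (householder x * B) = trace B - 2 / (x ⬝ᵥ x) * (x ⬝ᵥ (B *ᵥ x)) := by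
  rw [householder, sub_mul, one_mul, Matrix.smul_mul, vecMulVec_mul, trace_sub, trace_smul,
    trace_vecMulVec, dotProduct_comm x (x ᵥ* B), dotProduct_mulVec, smul_eq_mul]

lemma posSemidef_of_forall_trace_mul_le {B : Matrix n n ℝ}
    (hmax : ∀ W ∈ orthogonalGroup n ℝ, trace (W * B) ≤ trace B) : B.PosSemidef := by
  refine posSemidef_iff_dotProduct_mulVec.mpr
    ⟨isHermitian_iff_isSymm.mpr (isSymm_of_forall_trace_mul_le hmax), fun x => ?_⟩
  rcases eq_or_ne x 0 with rfl | hx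
  · simp
  have hc : 0 < 2 / (x ⬝ᵥ x) :=
    div_pos two_pos (by simpa using dotProduct_star_self_pos_iff.mpr hx)
  have := hmax _ (householder_mem_orthogonalGroup hx)
  rw [trace_householder_mul] at this
  simpa using nonneg_of_mul_nonneg_right (by linarith) hc

theorem forall_trace_mul_le_iff_posSemidef {B : Matrix n n ℝ} :
    (∀ W ∈ orthogonalGroup n ℝ, trace (W * B) ≤ trace B) ↔ B.PosSemidef :=
  ⟨posSemidef_of_forall_trace_mul_le,
    fun hB _ hW => trace_mul_le_trace_of_mem_orthogonalGroup hW hB⟩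

theorem forall_trace_transpose_mul_le_iff_posSemidef {A Ω : Matrix n n ℝ}
    (hΩ : Ω ∈ orthogonalGroup n ℝ) :
    (∀ Ω' ∈ orthogonalGroup n ℝ, trace (Ω'ᵀ * A) ≤ trace (Ωᵀ * A)) ↔ (Ωᵀ * A).PosSemidef := by
  rw [← forall_trace_mul_le_iff_posSemidef]
  constructor
  · intro h W hW
    simpa [Matrix.mul_assoc] using h (Ω * Wᵀ) (mul_mem hΩ (Unitary.star_mem hW))
  · intro h Ω' hΩ'
    have := h (Ω'ᵀ * Ω) (mul_mem (Unitary.star_mem hΩ') hΩ)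
    rwa [Matrix.mul_assoc, ← Matrix.mul_assoc Ω, (mem_orthogonalGroup_iff _ _).mp hΩ,
      Matrix.one_mul] at this

lemma posSemidef_transpose_mul_iff_exists_eq_mul {A Ω : Matrix n n ℝ}
    (hΩ : Ω ∈ orthogonalGroup n ℝ) :
    (Ωᵀ * A).PosSemidef ↔ ∃ P : Matrix n n ℝ, P.PosSemidef ∧ A = Ω * P := by
  refine ⟨fun h => ⟨_, h, ?_⟩, fun ⟨P, hP, hA⟩ => ?_⟩
  · rw [← Matrix.mul_assoc, (mem_orthogonalGroup_iff _ _).mp hΩ, Matrix.one_mul]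
  · rwa [hA, ← Matrix.mul_assoc, (mem_orthogonalGroup_iff' _ _).mp hΩ, Matrix.one_mul]

lemma eq_sqrt_of_eq_mul_posSemidef {A Ω P : Matrix n n ℝ} (hΩ : Ω ∈ orthogonalGroup n ℝ)
    (hP : P.PosSemidef) (hA : A = Ω * P) : P = CFC.sqrt (Aᵀ * A) := by
  refine (CFC.sqrt_unique ?_ hP.nonneg).symm
  rw [hA, transpose_mul, (isHermitian_iff_isSymm.mp hP.isHermitian).eq, Matrix.mul_assoc,
    ← Matrix.mul_assoc Ωᵀ, (mem_orthogonalGroup_iff' _ _).mp hΩ, Matrix.one_mul]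

theorem existsUnique_polar_of_isUnit {A : Matrix n n ℝ} (hA : IsUnit A) :
    ∃! Ω, Ω ∈ orthogonalGroup n ℝ ∧ ∃ P : Matrix n n ℝ, P.PosSemidef ∧ A = Ω * P := by
  set P := CFC.sqrt (Aᵀ * A)
  have hPsd : P.PosSemidef := (CFC.sqrt_nonneg _).posSemidef
  have hPP : P * P = Aᵀ * A :=
    CFC.sqrt_mul_sqrt_self _ (posSemidef_conjTranspose_mul_self A).nonneg
  have hP : IsUnit P.det := by
    refine isUnit_of_mul_isUnit_left (y := P.det) ?_
    have hAdet := (isUnit_iff_isUnit_det A).mp hA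
    rw [← det_mul, hPP, det_mul, det_transpose]
    exact hAdet.mul hAdet
  refine ⟨A * P⁻¹, ⟨?_, P, hPsd, ?_⟩, ?_⟩
  · rw [mem_orthogonalGroup_iff', transpose_mul, transpose_nonsing_inv,
      (isHermitian_iff_isSymm.mp hPsd.isHermitian).eq, Matrix.mul_assoc, ← Matrix.mul_assoc Aᵀ,
      ← hPP, ← Matrix.mul_assoc, ← Matrix.mul_assoc, nonsing_inv_mul _ hP, Matrix.one_mul,
      mul_nonsing_inv _ hP]
  · rw [Matrix.mul_assoc, nonsing_inv_mul _ hP, Matrix.mul_one]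
  · rintro Ω ⟨hΩ, Q, hQ, hAΩ⟩
    rw [hAΩ, eq_sqrt_of_eq_mul_posSemidef hΩ hQ hAΩ, Matrix.mul_assoc, mul_nonsing_inv _ hP,
      Matrix.mul_one]

lemma isUnit_of_rank_eq_card {K : Type*} [Field K] {A : Matrix n n K}
    (h : A.rank = Fintype.card n) : IsUnit A := by
  refine mulVec_surjective_iff_isUnit.mp ((LinearMap.range_eq_top (f := A.mulVecLin)).mp ?_)
  apply Submodule.eq_top_of_finrank_eq
  rw [← rank, h, Module.finrank_fintype_fun_eq_card]

end Matrix

section Procrustes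

variable {m n : Type*} [Fintype m] [Fintype n]

lemma frobNorm_le_frobNorm_iff {A B : Matrix m n ℝ} :
    frobNorm A ≤ frobNorm B ↔ trace (Aᵀ * A) ≤ trace (Bᵀ * B) :=
  Real.sqrt_le_sqrt_iff (posSemidef_conjTranspose_mul_self B).trace_nonneg

variable [DecidableEq n] {M N : Matrix m n ℝ}

lemma trace_transpose_mul_self_mul_sub {Ω : Matrix n n ℝ} (hΩ : Ω ∈ orthogonalGroup n ℝ) :
    trace ((M * Ω - N)ᵀ * (M * Ω - N)) =
      trace (Mᵀ * M) + trace (Nᵀ * N) - 2 * trace (Ωᵀ * (Mᵀ * N)) := by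
  have hMΩ : trace ((M * Ω)ᵀ * (M * Ω)) = trace (Mᵀ * M) := by
    rw [transpose_mul, trace_mul_comm, Matrix.mul_assoc, ← Matrix.mul_assoc Ω,
      (mem_orthogonalGroup_iff _ _).mp hΩ, Matrix.one_mul, trace_mul_comm]
  have hNMΩ : trace (Nᵀ * (M * Ω)) = trace (Ωᵀ * (Mᵀ * N)) := by
    rw [← trace_transpose, transpose_mul, transpose_mul, transpose_transpose, Matrix.mul_assoc]
  rw [transpose_sub, Matrix.sub_mul, Matrix.mul_sub, Matrix.mul_sub, trace_sub, trace_sub,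
    trace_sub, hMΩ, hNMΩ, transpose_mul, Matrix.mul_assoc]
  ring

lemma frobNorm_mul_sub_le_iff {Ω Ω' : Matrix n n ℝ} (hΩ : Ω ∈ orthogonalGroup n ℝ)
    (hΩ' : Ω' ∈ orthogonalGroup n ℝ) :
    frobNorm (M * Ω - N) ≤ frobNorm (M * Ω' - N) ↔
      trace (Ω'ᵀ * (Mᵀ * N)) ≤ trace (Ωᵀ * (Mᵀ * N)) := by
  rw [frobNorm_le_frobNorm_iff, trace_transpose_mul_self_mul_sub hΩ,
    trace_transpose_mul_self_mul_sub hΩ']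
  constructor <;> intro h <;> linarith

theorem forall_frobNorm_mul_sub_le_iff {Ω : Matrix n n ℝ} (hΩ : Ω ∈ orthogonalGroup n ℝ) :
    (∀ Ω' ∈ orthogonalGroup n ℝ, frobNorm (M * Ω - N) ≤ frobNorm (M * Ω' - N)) ↔
      ∃ P : Matrix n n ℝ, P.PosSemidef ∧ Mᵀ * N = Ω * P := by
  rw [← posSemidef_transpose_mul_iff_exists_eq_mul hΩ,
    ← forall_trace_transpose_mul_le_iff_posSemidef hΩ]
  exact forall₂_congr fun Ω' hΩ' => frobNorm_mul_sub_le_iff hΩ hΩ'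

end Procrustes

/-- The solutions of the orthogonal Procrustes problem `min_{Ω ∈ O(d)} ‖MΩ - N‖` are
exactly the orthogonal factors of polar decompositions of `Mᵀ N`; in particular, the
minimizer is unique when `Mᵀ N` has full rank. -/
theorem orthogonal_procrustes
    (n d : ℕ) (M N : Matrix (Fin n) (Fin d) ℝ) :
    (∀ Ω : Matrix (Fin d) (Fin d) ℝ, Ω * Ωᵀ = 1 →
      ((∀ Ω' : Matrix (Fin d) (Fin d) ℝ, Ω' * Ω'ᵀ = 1 →
          frobNorm (M * Ω - N) ≤ frobNorm (M * Ω' - N)) ↔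
        ∃ P : Matrix (Fin d) (Fin d) ℝ, P.PosSemidef ∧ Mᵀ * N = Ω * P))
    ∧ ((Mᵀ * N).rank = d →
        ∃! Ω : Matrix (Fin d) (Fin d) ℝ, Ω * Ωᵀ = 1 ∧
          ∀ Ω' : Matrix (Fin d) (Fin d) ℝ, Ω' * Ω'ᵀ = 1 →
            frobNorm (M * Ω - N) ≤ frobNorm (M * Ω' - N)) := by
  simp only [← mem_orthogonalGroup_iff]
  refine ⟨fun Ω hΩ => forall_frobNorm_mul_sub_le_iff hΩ, fun hrank => ?_⟩
  have hA : IsUnit (Mᵀ * N) := isUnit_of_rank_eq_card (by rwa [Fintype.card_fin])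
  obtain ⟨Ω, ⟨hΩ, hpolar⟩, huniq⟩ := existsUnique_polar_of_isUnit hA
  refine ⟨Ω, ⟨hΩ, (forall_frobNorm_mul_sub_le_iff hΩ).mpr hpolar⟩, ?_⟩
  rintro Ω' ⟨hΩ', hmin⟩
  exact huniq Ω' ⟨hΩ', (forall_frobNorm_mul_sub_le_iff hΩ').mp hmin⟩
end

section
/- Let F ⊆ G be an isometric inclusion of a discrete subgroup F into a metric group G, let 2r be the infimum of distances between distinct elements of F, and let ⟨-⟩ : F^r → F denote projection to the unique closest element of F (defined on the open r-neighborhood F^r of F in G). Then: (1) if a ∈ F^s, b ∈ F^t, c ∈ F^u with s + t + u ≤ r, then ⟨a⟩⟨b⟩⟨c⟩ = ⟨abc⟩; (2) if a ∈ F^r and b ∈ F, then ⟨ab⟩ = ⟨a⟩b; (3) if a, c ∈ G, b ∈ F^s, and a⟨b⟩c ∈ F^t with s + t ≤ r, then ⟨a⟨b⟩c⟩ = ⟨abc⟩. -/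
/-- Projections to a discrete subgroup `F` of a metric group `G` (with pairwise
distances in `F` bounded below by `2r`) interact with multiplication: writing `⟨g⟩` for
the unique element of `F` within the relevant distance of `g`, we have
(1) `⟨a⟩⟨b⟩⟨c⟩ = ⟨abc⟩` when `a ∈ F^s`, `b ∈ F^t`, `c ∈ F^u` and `s + t + u ≤ r`;
(2) `⟨ab⟩ = ⟨a⟩b` when `a ∈ F^r` and `b ∈ F`;
(3) `⟨a⟨b⟩c⟩ = ⟨abc⟩` when `b ∈ F^s`, `a⟨b⟩c ∈ F^t`, and `s + t ≤ r`. -/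
theorem discrete_subgroup_projection_mul
    (G : Type*) [Group G] [MetricSpace G]
    (hleft : ∀ g : G, Isometry fun x : G => g * x)
    (hright : ∀ g : G, Isometry fun x : G => x * g)
    (hinv : Isometry fun x : G => x⁻¹)
    (F : Subgroup G) (r : ℝ)
    (hsep : ∀ a b : G, a ∈ F → b ∈ F → a ≠ b → 2 * r ≤ dist a b) :
    (∀ s t u : ℝ, s + t + u ≤ r →
      ∀ a b c pa pb pc : G, pa ∈ F → pb ∈ F → pc ∈ F →
        dist a pa < s → dist b pb < t → dist c pc < u →
        dist (a * b * c) (pa * pb * pc) < r ∧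
        ∀ q ∈ F, dist (a * b * c) q < r → q = pa * pb * pc)
    ∧ (∀ a pa b : G, pa ∈ F → dist a pa < r → b ∈ F →
        dist (a * b) (pa * b) < r ∧
        ∀ q ∈ F, dist (a * b) q < r → q = pa * b)
    ∧ (∀ s t : ℝ, s + t ≤ r →
        ∀ a b c pb p₂ : G, pb ∈ F → dist b pb < s →
          p₂ ∈ F → dist (a * pb * c) p₂ < t →
          dist (a * b * c) p₂ < r ∧
          ∀ q ∈ F, dist (a * b * c) q < r → q = p₂) := by

  have dl : ∀ g x y : G, dist (g * x) (g * y) = dist x y := fun g x y => (hleft g).dist_eq x y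
  have dr : ∀ g x y : G, dist (x * g) (y * g) = dist x y := fun g x y => (hright g).dist_eq x y
  have uniq : ∀ g p q : G, p ∈ F → q ∈ F → dist g p < r → dist g q < r → q = p := by
    intro g p q hp hq h1 h2
    by_contra hne
    have h3 := hsep q p hq hp hne
    have h4 := dist_triangle q g p
    have h5 : dist q g = dist g q := dist_comm q g
    linarith
  refine ⟨?_, ?_, ?_⟩
  · intro s t u hstu a b c pa pb pc hpa hpb hpc ha hb hc
    have key : dist (a * b * c) (pa * pb * pc) < r := by
      have t1 := dist_triangle (a * b * c) (pa * b * c) (pa * pb * pc)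
      have t2 := dist_triangle (pa * b * c) (pa * pb * c) (pa * pb * pc)
      have e1 : dist (a * b * c) (pa * b * c) = dist a pa := by
        rw [dr, dr]
      have e2 : dist (pa * b * c) (pa * pb * c) = dist b pb := by
        rw [dr, dl]
      have e3 : dist (pa * pb * c) (pa * pb * pc) = dist c pc := by
        rw [mul_assoc, mul_assoc, dl, dl]
      linarith
    exact ⟨key, fun q hq hqd => uniq _ _ _ (mul_mem (mul_mem hpa hpb) hpc) hq key hqd⟩
  · intro a pa b hpa ha hb
    have key : dist (a * b) (pa * b) < r := by rw [dr]; exact ha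
    exact ⟨key, fun q hq hqd => uniq _ _ _ (mul_mem hpa hb) hq key hqd⟩
  · intro s t hst a b c pb p₂ hpb hb hp₂ hd
    have key : dist (a * b * c) p₂ < r := by
      have t1 := dist_triangle (a * b * c) (a * pb * c) p₂
      have e1 : dist (a * b * c) (a * pb * c) = dist b pb := by rw [dr, dl]
      linarith
    exact ⟨key, fun q hq hqd => uniq _ _ _ hp₂ hq key hqd⟩
end

section
/- Let ζ : G → H be a Riemannian covering map with H compact, let h, h' ∈ H with d_H(h,h') < sys(H)/2, and let g ∈ G with ζ(g) = h. Then there exists a unique preimage g' of h' with d_G(g,g') < sys(H)/2, and this g' satisfies d_G(g,g') = d_H(h,h'). -/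
/-- The length of a path in a pseudo-emetric space, as the total variation of the path. -/
noncomputable def pathLength {X : Type*} [PseudoEMetricSpace X] {x y : X}
    (γ : Path x y) : ENNReal :=
  eVariationOn (fun t => γ t) Set.univ

/-- The systole of a space: the infimum of lengths of non-nullhomotopic loops. -/
noncomputable def systole (H : Type*) [PseudoEMetricSpace H] : ENNReal :=
  sInf {L : ENNReal | ∃ (x : H) (γ : Path x x),
    ¬ Path.Homotopic γ (Path.refl x) ∧ L = pathLength γ}

/-! A path from `h` to `h'` shorter than `sys(H)/2` lifts to a path from `g` of the same length,
since a local isometry preserves the variation of continuous paths; its endpoint is `g'`.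
Two preimages of `h'` within `sys(H)/2` of `g` are joined through `g` by a path whose image is a
loop shorter than `sys(H)`, hence null-homotopic, so by monodromy its lift is closed and the two
preimages coincide. By this uniqueness every path from `h` to `h'` shorter than `sys(H)/2` lifts
to a path ending at `g'`, which gives `d_G(g, g') ≤ d_H(h, h')`; the reverse inequality holds
because `ζ` is 1-Lipschitz. -/

open Set unitInterval Topology

section PathLength

variable {X : Type*} [PseudoEMetricSpace X] {x y z : X}

theorem edist_le_pathLength (γ : Path x y) : edist x y ≤ pathLength γ := by
  simpa [pathLength] using eVariationOn.edist_le (fun t => γ t) (mem_univ 0) (mem_univ 1)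

theorem pathLength_eq_eVariationOn_extend (γ : Path x y) :
    pathLength γ = eVariationOn γ.extend (Icc 0 1) := by
  have hγ : (fun t => γ t) = γ.extend ∘ Subtype.val := funext fun t => (γ.extend_extends' t).symm
  rw [pathLength, hγ, eVariationOn.comp_eq_of_monotoneOn _ _ ((Subtype.mono_coe _).monotoneOn _),
    image_univ, Subtype.range_coe]

theorem pathLength_symm (γ : Path x y) : pathLength γ.symm = pathLength γ := by
  rw [pathLength_eq_eVariationOn_extend, pathLength_eq_eVariationOn_extend, Path.extend_symm,
    show (fun t => γ.extend (1 - t)) = γ.extend ∘ (1 - ·) from rfl,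
    eVariationOn.comp_eq_of_antitoneOn _ _ fun a _ b _ hab => sub_le_sub_left hab 1,
    image_const_sub_Icc, sub_zero, sub_self]

theorem pathLength_trans (γ : Path x y) (γ' : Path y z) :
    pathLength (γ.trans γ') = pathLength γ + pathLength γ' := by
  have h0 : (0 : ℝ) ≤ 1 / 2 := by norm_num
  have h1 : (1 / 2 : ℝ) ≤ 1 := by norm_num
  have hsplit := eVariationOn.union (γ.trans γ').extend (isGreatest_Icc h0) (isLeast_Icc h1)
  rw [Icc_union_Icc_eq_Icc h0 h1] at hsplit
  rw [pathLength_eq_eVariationOn_extend, hsplit,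
    eVariationOn.congr fun t ht => Path.extend_trans_of_le_half γ γ' ht.2,
    eVariationOn.congr fun t ht => Path.extend_trans_of_half_le γ γ' ht.1,
    show (fun t => γ.extend (2 * t)) = γ.extend ∘ (2 * ·) from rfl,
    show (fun t => γ'.extend (2 * t - 1)) = γ'.extend ∘ (2 * · - 1) from rfl,
    eVariationOn.comp_eq_of_monotoneOn _ _ fun a _ b _ hab => by linarith,
    eVariationOn.comp_eq_of_monotoneOn _ _ fun a _ b _ hab => by linarith,
    pathLength_eq_eVariationOn_extend, pathLength_eq_eVariationOn_extend]
  congr 2 <;> ext t <;> constructor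
  · rintro ⟨s, ⟨hs0, hs1⟩, rfl⟩; constructor <;> linarith
  · rintro ⟨ht0, ht1⟩; exact ⟨t / 2, ⟨by linarith, by linarith⟩, by ring⟩
  · rintro ⟨s, ⟨hs0, hs1⟩, rfl⟩; constructor <;> linarith
  · rintro ⟨ht0, ht1⟩; exact ⟨(t + 1) / 2, ⟨by linarith, by linarith⟩, by ring⟩

end PathLength

def IsLengthSpace (X : Type*) [PseudoEMetricSpace X] : Prop :=
  ∀ x y : X, edist x y = sInf {L : ENNReal | ∃ γ : Path x y, L = pathLength γ}

namespace IsLengthSpace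

variable {X : Type*} [PseudoEMetricSpace X] (hX : IsLengthSpace X) {x y : X}
include hX

theorem exists_pathLength_lt {r : ENNReal} (h : edist x y < r) :
    ∃ γ : Path x y, pathLength γ < r := by
  rw [hX] at h
  obtain ⟨_, ⟨γ, rfl⟩, hγ⟩ := sInf_lt_iff.1 h
  exact ⟨γ, hγ⟩

theorem le_edist {c : ENNReal} (h : ∀ γ : Path x y, c ≤ pathLength γ) : c ≤ edist x y := by
  rw [hX]
  exact le_sInf fun _ ⟨γ, hγ⟩ => hγ ▸ h γ

end IsLengthSpace

def IsLocalIsometry {X Y : Type*} [PseudoEMetricSpace X] [PseudoEMetricSpace Y] (f : X → Y) :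
    Prop :=
  ∀ x, ∃ V ∈ 𝓝 x, ∀ a ∈ V, ∀ b ∈ V, edist (f a) (f b) = edist a b

theorem eVariationOn_congr_edist {α X Y : Type*} [LinearOrder α] [PseudoEMetricSpace X]
    [PseudoEMetricSpace Y] {f : α → X} {g : α → Y} {s : Set α}
    (h : ∀ u ∈ s, ∀ v ∈ s, edist (f u) (f v) = edist (g u) (g v)) :
    eVariationOn f s = eVariationOn g s := by
  simp only [eVariationOn]
  congr! 2 with p
  exact Finset.sum_congr rfl fun i _ => h _ (p.2.2.2 _) _ (p.2.2.2 _)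

namespace IsLocalIsometry

variable {X Y : Type*} [PseudoEMetricSpace X] [PseudoEMetricSpace Y] {f : X → Y}
  (hf : IsLocalIsometry f)
include hf

theorem eVariationOn_comp {γ : I → X} (hγ : Continuous γ) :
    eVariationOn (f ∘ γ) univ = eVariationOn γ univ := by
  choose V hV hVf using hf
  obtain ⟨t, ht0, ht, ⟨N, htN⟩, hsub⟩ := exists_monotone_Icc_subset_open_cover_unitInterval
    (c := fun s => γ ⁻¹' interior (V (γ s))) (fun s => isOpen_interior.preimage hγ)
    (fun s _ => mem_iUnion.2 ⟨s, mem_interior_iff_mem_nhds.2 (hV (γ s))⟩)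
  have huniv : (univ : Set I) = Icc (t 0) (t N) := by
    rw [ht0, htN N le_rfl]
    exact (Icc_bot_top (α := I)).symm
  rw [huniv, ← eVariationOn.sum' _ ht, ← eVariationOn.sum' _ ht]
  refine Finset.sum_congr rfl fun n _ => eVariationOn_congr_edist fun u hu v hv => ?_
  obtain ⟨s, hs⟩ := hsub n
  exact hVf _ _ (interior_subset (hs hu)) _ (interior_subset (hs hv))

theorem pathLength_map (hc : Continuous f) {x y : X} (γ : Path x y) :
    pathLength (γ.map hc) = pathLength γ :=
  hf.eVariationOn_comp γ.continuous

theorem edist_le (hc : Continuous f) (hX : IsLengthSpace X) (a b : X) :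
    edist (f a) (f b) ≤ edist a b :=
  hX.le_edist fun γ => (edist_le_pathLength (γ.map hc)).trans_eq (hf.pathLength_map hc γ)

end IsLocalIsometry

theorem Path.homotopic_refl_of_pathLength_lt_systole {X : Type*} [PseudoEMetricSpace X] {x : X}
    (γ : Path x x) (h : pathLength γ < systole X) : γ.Homotopic (Path.refl x) := by
  by_contra hγ
  exact h.not_ge (sInf_le ⟨x, γ, hγ, rfl⟩)

namespace IsCoveringMap

theorem eq_of_map_homotopic_refl {E X : Type*} [TopologicalSpace E]
    [TopologicalSpace X] {p : E → X} (hp : IsCoveringMap p) {e₁ e₂ : E} (Λ : Path e₁ e₂)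
    (he : p e₁ = p e₂) (hΛ : ((Λ.map hp.continuous).cast rfl he).Homotopic (Path.refl (p e₁))) :
    e₁ = e₂ := by
  have hlift := hp.liftPath_apply_one_eq_of_homotopicRel hΛ e₁ (by simp) (by simp)
  rw [← (hp.eq_liftPath_iff' _).2 ⟨rfl, Λ.source⟩,
    ← (hp.eq_liftPath_iff' (e := e₁) (Γ := .const I e₁) _).2 ⟨rfl, rfl⟩] at hlift
  simpa using hlift.symm

section LocalIsometry

variable {E X : Type*} [PseudoEMetricSpace E] [PseudoEMetricSpace X] {p : E → X}
  (hp : IsCoveringMap p) (hpl : IsLocalIsometry p)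
include hp hpl

theorem exists_lift_edist_le {x y : X} (γ : Path x y) {e : E} (he : p e = x) :
    ∃ e' : E, p e' = y ∧ edist e e' ≤ pathLength γ := by
  obtain ⟨Γ, hΓ, hΓ0⟩ := hp.exists_path_lifts γ.toContinuousMap e (γ.source.trans he.symm)
  refine ⟨Γ 1, congr_fun hΓ 1 |>.trans γ.target, ?_⟩
  let Λ : Path e (Γ 1) := ⟨Γ, hΓ0, rfl⟩
  calc edist e (Γ 1) ≤ pathLength Λ := edist_le_pathLength Λ
    _ = pathLength (Λ.map hp.continuous) := (hpl.pathLength_map hp.continuous Λ).symm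
    _ = pathLength γ := congrArg (eVariationOn · univ) hΓ

theorem eq_of_edist_lt_systole_half (hE : IsLengthSpace E) {e e₁ e₂ : E} (h : p e₁ = p e₂)
    (h₁ : edist e e₁ < systole X / 2) (h₂ : edist e e₂ < systole X / 2) : e₁ = e₂ := by
  obtain ⟨α, hα⟩ := hE.exists_pathLength_lt h₁
  obtain ⟨β, hβ⟩ := hE.exists_pathLength_lt h₂
  refine hp.eq_of_map_homotopic_refl (α.symm.trans β) h
    (Path.homotopic_refl_of_pathLength_lt_systole _ ?_)
  calc pathLength (((α.symm.trans β).map hp.continuous).cast rfl h)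
      = pathLength α + pathLength β := by
        rw [← pathLength_symm α, ← pathLength_trans]
        exact hpl.pathLength_map hp.continuous _
    _ < systole X / 2 + systole X / 2 := ENNReal.add_lt_add hα hβ
    _ = systole X := ENNReal.add_halves _

end LocalIsometry

end IsCoveringMap

theorem riemannian_covering_metric_lift_general
    (G H : Type*) [EMetricSpace G] [EMetricSpace H]
    (hGgeo : ∀ x y : G, edist x y = sInf {L : ENNReal | ∃ γ : Path x y, L = pathLength γ})
    (hHgeo : ∀ x y : H, edist x y = sInf {L : ENNReal | ∃ γ : Path x y, L = pathLength γ})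
    (ζ : G → H) (hcov : IsCoveringMap ζ)
    (hloc : ∀ g : G, ∃ V ∈ nhds g, ∀ a ∈ V, ∀ b ∈ V, edist (ζ a) (ζ b) = edist a b)
    (h h' : H) (hd : edist h h' < systole H / 2)
    (g : G) (hg : ζ g = h) :
    ∃ g' : G, ζ g' = h' ∧ edist g g' < systole H / 2 ∧ edist g g' = edist h h' ∧
      ∀ g'' : G, ζ g'' = h' → edist g g'' < systole H / 2 → g'' = g' := by
  obtain ⟨γ, hγ⟩ := IsLengthSpace.exists_pathLength_lt hHgeo hd
  obtain ⟨g', hg', hgg'⟩ := hcov.exists_lift_edist_le hloc γ hg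
  have hlt : edist g g' < systole H / 2 := hgg'.trans_lt hγ
  refine ⟨g', hg', hlt, le_antisymm ?_ ?_, fun g'' hg'' hlt'' =>
    hcov.eq_of_edist_lt_systole_half hloc hGgeo (hg''.trans hg'.symm) hlt'' hlt⟩
  · refine IsLengthSpace.le_edist hHgeo fun δ => ?_
    rcases lt_or_ge (pathLength δ) (systole H / 2) with hδ | hδ
    · obtain ⟨g'', hg'', hgg''⟩ := hcov.exists_lift_edist_le hloc δ hg
      rwa [hcov.eq_of_edist_lt_systole_half hloc hGgeo (hg'.trans hg''.symm) hlt
        (hgg''.trans_lt hδ)]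
    · exact hlt.le.trans hδ
  · simpa only [hg, hg'] using IsLocalIsometry.edist_le hloc hcov.continuous hGgeo g g'

/-- Metrically controlled path lifting: for a Riemannian covering map `ζ : G → H`
(modeled as geodesic emetric spaces, `ζ` a local isometry) with `H` compact, if
`d_H(h, h') < sys(H)/2` and `ζ g = h`, then there is a unique preimage `g'` of `h'`
with `d_G(g, g') < sys(H)/2`, and it satisfies `d_G(g, g') = d_H(h, h')`. -/
theorem riemannian_covering_metric_lift
    (G H : Type*) [EMetricSpace G] [EMetricSpace H] [CompactSpace H]
    (hGgeo : ∀ x y : G, edist x y = sInf {L : ENNReal | ∃ γ : Path x y, L = pathLength γ})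
    (hHgeo : ∀ x y : H, edist x y = sInf {L : ENNReal | ∃ γ : Path x y, L = pathLength γ})
    (ζ : G → H) (hcov : IsCoveringMap ζ)
    (hloc : ∀ g : G, ∃ V ∈ nhds g, ∀ a ∈ V, ∀ b ∈ V, edist (ζ a) (ζ b) = edist a b)
    (h h' : H) (hd : edist h h' < systole H / 2)
    (g : G) (hg : ζ g = h) :
    ∃ g' : G, ζ g' = h' ∧ edist g g' < systole H / 2 ∧ edist g g' = edist h h' ∧
      ∀ g'' : G, ζ g'' = h' → edist g g'' < systole H / 2 → g'' = g' :=
  riemannian_covering_metric_lift_general G H hGgeo hHgeo ζ hcov hloc h h' hd g hg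
end
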